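/- Let T = (T(n,k))_{n,k≥0} be the array with entries in ℤ[c,d,e] defined by T(0,k) = δ_{k0} and, for n ≥ 1, T(n,k) = c·T(n−1,k−1) + (dk+e)·T(n−1,k), with T(n,k) = 0 for k < 0. Then T is coefficientwise totally positive: for every r ≥ 1 and all indices n_1 < ⋯ < n_r and k_1 < ⋯ < k_r, the determinant det(T(n_i,k_j))_{1≤i,j≤r} is a polynomial in c,d,e with nonnegative integer coefficients. -/

import Mathlib

/- The polynomial ring ℤ[c,d,e]: variable 0 ↦ c, 1 ↦ d, 2 ↦ e. -/
noncomputable def cVar : MvPolynomial (Fin 3) ℤ := MvPolynomial.X 0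
noncomputable def dVar : MvPolynomial (Fin 3) ℤ := MvPolynomial.X 1
noncomputable def eVar : MvPolynomial (Fin 3) ℤ := MvPolynomial.X 2

/-- The array `T(n,k)` with entries in ℤ[c,d,e], defined by `T(0,k) = δ_{k0}` and
`T(n,k) = c·T(n−1,k−1) + (dk+e)·T(n−1,k)` for `n ≥ 1`.  The second index ranges
over ℤ, so the convention `T(n,k) = 0` for `k < 0` is automatic. -/
noncomputable def T : ℕ → ℤ → MvPolynomial (Fin 3) ℤ
  | 0, k => if k = 0 then 1 else 0
  | n + 1, k =>
      cVar * T n (k - 1) + (dVar * ((k : ℤ) : MvPolynomial (Fin 3) ℤ) + eVar) * T n k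

/-!
The rows of `T` satisfy `T (n + 1) = T n * P` for the upper bidiagonal production matrix `P`
with `P (k - 1) k = c` and `P k k = d k + e`. So each column of a minor of `T` whose row
indices are all positive is `c` times a column of the minor one row lower, shifted left by one,
plus `d k + e` times the unshifted column. By multilinearity the minor is a sum, with
coefficientwise nonnegative weights, of minors with every row index lowered by one and weakly
increasing column indices; those with a repeated column vanish. A row with index `0` is a unit
vector `δ_{k0}` and peels off by Laplace expansion. Induction on the number of rows and on the
first row index concludes.
-/

namespace MvPolynomial

variable (σ R : Type*) [CommSemiring R] [PartialOrder R] [IsOrderedRing R]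

def nonnegCoeffs : Subsemiring (MvPolynomial σ R) where
  carrier := {p | ∀ m, 0 ≤ p.coeff m}
  mul_mem' {p q} hp hq m := by
    classical
    rw [coeff_mul]
    exact Finset.sum_nonneg fun x _ => mul_nonneg (hp _) (hq _)
  one_mem' m := by
    classical
    rw [coeff_one]
    split_ifs <;> simp
  add_mem' hp hq m := by
    rw [coeff_add]
    exact add_nonneg (hp m) (hq m)
  zero_mem' m := by simp

variable {σ R}

theorem mem_nonnegCoeffs {p : MvPolynomial σ R} : p ∈ nonnegCoeffs σ R ↔ ∀ m, 0 ≤ p.coeff m :=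
  Iff.rfl

theorem X_mem_nonnegCoeffs (i : σ) : X i ∈ nonnegCoeffs σ R := fun m => by
  classical
  rw [coeff_X]
  split_ifs <;> simp

end MvPolynomial

namespace Matrix

variable {m n κ R : Type*} [Fintype n] [DecidableEq n] [Fintype κ] [CommRing R]

theorem det_of_sum_mul_submatrix (A : Matrix n m R) (a : n → κ → R) (f : n → κ → m) :
    det (of fun i j => ∑ s, a j s * A i (f j s)) =
      ∑ p : n → κ, (∏ j, a j (p j)) * det (A.submatrix id fun j => f j (p j)) := by
  rw [← det_transpose]
  have hcols : (of fun i j => ∑ s, a j s * A i (f j s))ᵀ =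
      fun j => ∑ s, a j s • fun i => A i (f j s) := by
    ext j i
    simp
  rw [hcols]
  change (detRowAlternating : (n → R) [⋀^n]→ₗ[R] R).toMultilinearMap (fun j => ∑ s, _) = _
  rw [MultilinearMap.map_sum]
  refine Finset.sum_congr rfl fun p _ => ?_
  rw [MultilinearMap.map_smul_univ, smul_eq_mul, ← det_transpose (A.submatrix _ _)]
  rfl

theorem det_eq_mul_det_submatrix_succ_of_row_zero {r : ℕ}
    (A : Matrix (Fin (r + 1)) (Fin (r + 1)) R) (h : ∀ j : Fin r, A 0 j.succ = 0) :
    A.det = A 0 0 * (A.submatrix Fin.succ Fin.succ).det := by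
  rw [det_succ_row_zero, Fin.sum_univ_succ, Finset.sum_eq_zero fun j _ => by simp [h j]]
  simp

theorem det_submatrix_eq_zero_of_not_injective {o : Type*} (A : Matrix m o R) (row : n → m)
    {col : n → o} (hcol : ¬ col.Injective) : (A.submatrix row col).det = 0 := by
  obtain ⟨i, j, hij, hne⟩ := Function.not_injective_iff.mp hcol
  exact det_zero_of_column_eq hne fun k => by simp [hij]

end Matrix

open MvPolynomial Matrix

theorem T_zero (k : ℤ) : T 0 k = if k = 0 then 1 else 0 := rfl

theorem T_of_neg (n : ℕ) {k : ℤ} (hk : k < 0) : T n k = 0 := by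
  induction n generalizing k with
  | zero => simp [T_zero, hk.ne]
  | succ n ih => simp [T, ih hk, ih (show k - 1 < 0 by omega)]

/-- `stepCoeff k b = P (k - b.toNat) k` for the production matrix `P` of `T`. -/
noncomputable def stepCoeff (k : ℤ) (b : Bool) : MvPolynomial (Fin 3) ℤ :=
  if b then cVar else dVar * k + eVar

theorem T_succ_eq_sum (n : ℕ) (k : ℤ) :
    T (n + 1) k = ∑ b : Bool, stepCoeff k b * T n (k - b.toNat) := by
  simp [T, stepCoeff]

theorem stepCoeff_mem_nonnegCoeffs {k : ℤ} (hk : 0 ≤ k) (b : Bool) :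
    stepCoeff k b ∈ nonnegCoeffs (Fin 3) ℤ := by
  lift k to ℕ using hk
  cases b
  · exact add_mem (mul_mem (X_mem_nonnegCoeffs 1) (natCast_mem _ k)) (X_mem_nonnegCoeffs 2)
  · exact X_mem_nonnegCoeffs 0

theorem det_T_submatrix_succ {r : ℕ} (row : Fin r → ℕ) (col : Fin r → ℤ) :
    ((of T).submatrix (fun i => row i + 1) col).det =
      ∑ p : Fin r → Bool, (∏ j, stepCoeff (col j) (p j)) *
        ((of T).submatrix row fun j => col j - (p j).toNat).det := by
  have hexp : (of T).submatrix (fun i => row i + 1) col =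
      of fun i j => ∑ b, stepCoeff (col j) b * (of T).submatrix row id i (col j - b.toNat) :=
    Matrix.ext fun i j => T_succ_eq_sum (row i) (col j)
  rw [hexp, det_of_sum_mul_submatrix]
  rfl

theorem det_T_submatrix_eq_zero_of_neg {r : ℕ} (row : Fin (r + 1) → ℕ) (col : Fin (r + 1) → ℤ)
    (hcol : col 0 < 0) : ((of T).submatrix row col).det = 0 :=
  det_eq_zero_of_column_eq_zero 0 fun _ => T_of_neg _ hcol

theorem det_T_submatrix_of_row_zero {r : ℕ} (row : Fin (r + 1) → ℕ) (col : Fin (r + 1) → ℤ)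
    (hrow : row 0 = 0) (hcol : StrictMono col) :
    ((of T).submatrix row col).det =
      T 0 (col 0) * ((of T).submatrix (fun i : Fin r => row i.succ) fun j => col j.succ).det := by
  rcases lt_or_ge (col 0) 0 with hneg | hcol0
  · rw [det_T_submatrix_eq_zero_of_neg row col hneg, T_of_neg 0 hneg, zero_mul]
  rw [det_eq_mul_det_submatrix_succ_of_row_zero]
  · rw [submatrix_submatrix, submatrix_apply, of_apply, hrow]
    rfl
  · intro j
    have := hcol (Fin.succ_pos j)
    simp [hrow, T_zero]
    omega

theorem monotone_sub_toNat_of_strictMono {ι : Type*} [PartialOrder ι] {col : ι → ℤ}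
    (hcol : StrictMono col) (p : ι → Bool) : Monotone fun j => col j - (p j).toNat := by
  intro i j hij
  rcases hij.lt_or_eq with hlt | rfl
  · have := hcol hlt
    have := Bool.toNat_le (p i)
    have := Bool.toNat_le (p j)
    dsimp only
    omega
  · rfl

theorem det_T_submatrix_mem_nonnegCoeffs {r : ℕ} (row : Fin r → ℕ) (col : Fin r → ℤ)
    (hrow : StrictMono row) (hcol : StrictMono col) :
    ((of T).submatrix row col).det ∈ nonnegCoeffs (Fin 3) ℤ := by
  induction r with
  | zero => simp [one_mem]
  | succ r ihr =>
    generalize hn : row 0 = n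
    induction n generalizing row col with
    | zero =>
      rw [det_T_submatrix_of_row_zero row col hn hcol]
      refine mul_mem ?_ (ihr _ _ (hrow.comp Fin.strictMono_succ) (hcol.comp Fin.strictMono_succ))
      rw [T_zero]
      split_ifs
      · exact one_mem _
      · exact zero_mem _
    | succ n ihn =>
      rcases lt_or_ge (col 0) 0 with hneg | hcol0
      · rw [det_T_submatrix_eq_zero_of_neg row col hneg]
        exact zero_mem _
      have hrow_pos : ∀ i, 1 ≤ row i := fun i => by
        have := hrow.monotone (Fin.zero_le i)
        omega
      have hrow_pred : row = fun i => (row i - 1) + 1 := funext fun i => by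
        have := hrow_pos i
        omega
      rw [hrow_pred, det_T_submatrix_succ]
      refine sum_mem fun p _ => mul_mem (prod_mem fun j _ =>
        stepCoeff_mem_nonnegCoeffs (hcol0.trans (hcol.monotone (Fin.zero_le j))) _) ?_
      by_cases hinj : (fun j => col j - (p j).toNat).Injective
      · refine ihn _ _ (fun i j hij => ?_)
          ((monotone_sub_toNat_of_strictMono hcol p).strictMono_of_injective hinj) (by omega)
        have := hrow hij
        have := hrow_pos i
        omega
      · rw [det_submatrix_eq_zero_of_not_injective _ _ hinj]
        exact zero_mem _

theorem T_coefficientwise_totally_positive_general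
    (r : ℕ) (row col : Fin r → ℕ)
    (hrow : StrictMono row) (hcol : StrictMono col) (m : Fin 3 →₀ ℕ) :
    0 ≤ (Matrix.det (Matrix.of fun i j : Fin r => T (row i) (col j))).coeff m :=
  mem_nonnegCoeffs.mp
    (det_T_submatrix_mem_nonnegCoeffs row (fun j => (col j : ℤ)) hrow
      (Nat.strictMono_cast.comp hcol)) m

/-- The matrix `T` is coefficientwise totally positive: every minor, with rows
`n₁ < ⋯ < n_r` and columns `k₁ < ⋯ < k_r`, is a polynomial in `c,d,e` with
nonnegative coefficients. -/
theorem T_coefficientwise_totally_positive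
    (r : ℕ) (hr : 1 ≤ r) (row col : Fin r → ℕ)
    (hrow : StrictMono row) (hcol : StrictMono col) (m : Fin 3 →₀ ℕ) :
    0 ≤ (Matrix.det (Matrix.of fun i j : Fin r => T (row i) (col j))).coeff m :=
  T_coefficientwise_totally_positive_general r row col hrow hcol m
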